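/- arXiv:1503.02654 — 2 statements merged into one kernel-verified Lean document; each statement's English description precedes it below -/
import Mathlib

section
/- Let P be a placement on a rooted tree, u an internal node with unfilled child v and child w satisfying r_v < r_w − 1 and r_w ≥ 1. Let q_w ∈ P be a leaf under w and q_v ∉ P an unoccupied leaf under v, and set P* = (P − {q_w}) ∪ {q_v}. Then f⃗(P*) <_L f⃗(P). -/
open scoped Classical

/-- A rooted tree on a finite vertex set `V`, given by a parent function under which
every vertex reaches the root. -/
structure FailTree (V : Type*) [Fintype V] where
  root : V
  parent : V → V
  parent_root : parent root = root
  reaches_root : ∀ v, ∃ n : ℕ, parent^[n] v = root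

namespace FailTree

variable {V : Type*} [Fintype V]

/-- `T.Desc u v` : `u` is a descendant of `v` (every node is a descendant of itself). -/
def Desc (T : FailTree V) (u v : V) : Prop := ∃ n : ℕ, T.parent^[n] u = v

/-- A leaf is a node with no children. -/
def IsLeaf (T : FailTree V) (v : V) : Prop := ∀ u, T.parent u = v → u = v

noncomputable def leaves (T : FailTree V) : Finset V :=
  Finset.univ.filter fun v => T.IsLeaf v

/-- The failure number `f(v, P)` of node `v` under placement `P`:
the number of members of `P` that are descendants of `v`. -/
noncomputable def fnum (T : FailTree V) (v : V) (P : Finset V) : ℕ :=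
  (P.filter fun p => T.Desc p v).card

/-- The failure aggregate restricted to a set `S` of nodes: entry `i` counts the
nodes of `S` having failure number `i`. -/
noncomputable def faggOn (T : FailTree V) (S P : Finset V) : ℕ → ℕ :=
  fun i => (S.filter fun v => T.fnum v P = i).card

/-- The failure aggregate `f⃗(P)`: entry `i` counts the nodes with failure number `i`. -/
noncomputable def fagg (T : FailTree V) (P : Finset V) : ℕ → ℕ :=
  T.faggOn Finset.univ P

/-- The node set of the path from the root to `x`, i.e. all ancestors of `x`. -/
noncomputable def pathTo (T : FailTree V) (x : V) : Finset V :=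
  Finset.univ.filter fun v => T.Desc x v

/-- The number of leaves in the subtree rooted at `v`. -/
noncomputable def leafCount (T : FailTree V) (v : V) : ℕ :=
  (T.leaves.filter fun l => T.Desc l v).card

end FailTree

/-- Strict lexicographic comparison of failure aggregates; entries with higher index
(higher failure number) are more significant. -/
def AggLt (p q : ℕ → ℕ) : Prop := ∃ m, p m < q m ∧ ∀ i, m < i → p i = q i

/-- Lexicographic comparison (non-strict) of failure aggregates. -/
def AggLe (p q : ℕ → ℕ) : Prop := p = q ∨ AggLt p q

/-!
Moving a replica from `q_w` to `q_v` changes the failure number only of the nodes on the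
path from `q_v` up to `v`, where it rises by one but stays at most `r_v + 1 < r_w`, and of
the nodes on the path from `q_w` up to `w`, where it drops by one from a value at most `r_w`.
So the entries of the aggregate above `r_w` are unchanged, and at index `r_w` no node is
gained while `w` itself is lost.
-/

open Finset

theorem Finset.card_filter_insert_erase_add {α : Type*} [DecidableEq α] (p : α → Prop)
    [DecidablePred p] {s : Finset α} {a b : α} (ha : a ∉ s) (hb : b ∈ s) :
    #{x ∈ insert a (s.erase b) | p x} + (if p b then 1 else 0) =
      #{x ∈ s | p x} + (if p a then 1 else 0) := by
  rw [card_filter, card_filter, sum_insert fun h => ha (mem_of_mem_erase h), add_assoc,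
    sum_erase_add _ _ hb, add_comm]

theorem aggLt_of_changes_below {α : Type*} [Fintype α] {f g : α → ℕ} {m : ℕ} {w : α}
    (hchange : ∀ x, g x ≠ f x → f x ≤ m ∧ g x < m) (hw : f w = m) (hgw : g w ≠ f w) :
    AggLt (fun i => #{x | g x = i}) (fun i => #{x | f x = i}) := by
  refine ⟨m, card_lt_card ?_, fun i hi => congrArg card (filter_congr fun x _ => ?_)⟩
  · have hsub : ({x | g x = m} : Finset α) ⊆ ({x | f x = m} : Finset α) := by
      refine monotone_filter_right _ fun x _ hx => ?_
      by_contra hfx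
      exact (hchange x (by omega)).2.ne hx
    refine (ssubset_iff_of_subset hsub).2 ⟨w, by simpa using hw, ?_⟩
    simpa [hw] using hgw
  · by_cases hx : g x = f x
    · rw [hx]
    · have := hchange x hx
      omega

namespace FailTree

variable {V : Type*} [Fintype V] {T : FailTree V} {a b u v w x y : V}

theorem Desc.refl : T.Desc x x := ⟨0, rfl⟩

theorem Desc.trans (h₁ : T.Desc a b) (h₂ : T.Desc b x) : T.Desc a x := by
  obtain ⟨m, rfl⟩ := h₁
  obtain ⟨n, rfl⟩ := h₂
  exact ⟨n + m, Function.iterate_add_apply _ n m a⟩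

variable (T) in
theorem desc_parent (x : V) : T.Desc x (T.parent x) := ⟨1, rfl⟩

theorem Desc.eq_or_parent (h : T.Desc x y) : x = y ∨ T.Desc (T.parent x) y := by
  obtain ⟨_ | n, hn⟩ := h
  · exact Or.inl hn
  · exact Or.inr ⟨n, hn⟩

theorem Desc.total (hx : T.Desc a x) (hy : T.Desc a y) : T.Desc x y ∨ T.Desc y x := by
  obtain ⟨m, rfl⟩ := hx
  obtain ⟨n, rfl⟩ := hy
  rcases le_total m n with h | h
  · exact Or.inl ⟨n - m, by rw [← Function.iterate_add_apply, Nat.sub_add_cancel h]⟩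
  · exact Or.inr ⟨m - n, by rw [← Function.iterate_add_apply, Nat.sub_add_cancel h]⟩

/-- The only cycle of `parent` is the loop at the root, which every node reaches. -/
theorem Desc.antisymm (h₁ : T.Desc a b) (h₂ : T.Desc b a) : a = b := by
  obtain ⟨m, rfl⟩ := h₁
  obtain ⟨n, hn⟩ := h₂
  rcases Nat.eq_zero_or_pos m with rfl | hm
  · rfl
  have hper : Function.IsPeriodicPt T.parent (n + m) a := by
    rw [Function.IsPeriodicPt, Function.IsFixedPt, Function.iterate_add_apply, hn]
  obtain ⟨k, hk⟩ := T.reaches_root a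
  have hroot := Function.iterate_fixed T.parent_root
  have ha : a = T.root := by
    have hk_le : k ≤ (n + m) * k := Nat.le_mul_of_pos_left k (by omega)
    calc a = T.parent^[(n + m) * k] a := ((hper.mul_const k).eq).symm
      _ = T.parent^[(n + m) * k - k] (T.parent^[k] a) := by
        rw [← Function.iterate_add_apply, Nat.sub_add_cancel hk_le]
      _ = T.root := by rw [hk, hroot]
  subst ha
  exact (hroot m).symm

theorem Desc.eq_of_parent_eq (h : T.Desc v w) (hv : T.parent v = u) (hw : T.parent w = u)
    (hw' : w ≠ u) : v = w := by
  rcases h.eq_or_parent with h | h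
  · exact h
  · rw [hv, ← hw] at h
    exact absurd (h.antisymm (T.desc_parent w)) (hw ▸ hw'.symm)

theorem Desc.not_desc_sibling (ha : T.Desc a v) (hv : T.parent v = u) (hv' : v ≠ u)
    (hw : T.parent w = u) (hw' : w ≠ u) (hvw : v ≠ w) : ¬ T.Desc a w := fun haw =>
  (ha.total haw).elim (fun h => hvw (h.eq_of_parent_eq hv hw hw'))
    (fun h => hvw (h.eq_of_parent_eq hw hv hv').symm)

theorem Desc.desc_of_not_parent_desc (ha : T.Desc a v) (hx : T.Desc a x)
    (hvx : ¬ T.Desc (T.parent v) x) : T.Desc x v := by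
  rcases hx.total ha with h | h
  · exact h
  · rcases h.eq_or_parent with rfl | h
    · exact Desc.refl
    · exact absurd h hvx

theorem fnum_mono (h : T.Desc x y) (P : Finset V) : T.fnum x P ≤ T.fnum y P :=
  card_le_card (monotone_filter_right _ fun _ _ hp => hp.trans h)

theorem fnum_pos {P : Finset V} (ha : a ∈ P) (h : T.Desc a x) : 0 < T.fnum x P :=
  card_pos.2 ⟨a, mem_filter.2 ⟨ha, h⟩⟩

theorem fnum_le_of_desc_of_not_desc (ha : T.Desc a v) (hb : T.Desc b (T.parent v))
    (hx : T.Desc a x) (hbx : ¬ T.Desc b x) (P : Finset V) : T.fnum x P ≤ T.fnum v P :=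
  fnum_mono (ha.desc_of_not_parent_desc hx fun h => hbx (hb.trans h)) P

end FailTree

theorem swap_strictly_improves_general {V : Type*} [Fintype V] (T : FailTree V)
    (P : Finset V)
    (u v w qv qw : V)
    (hv : T.parent v = u) (hv' : v ≠ u) (hw : T.parent w = u) (hw' : w ≠ u) (hvw : v ≠ w)
    (hgap : T.fnum v P < T.fnum w P - 1)
    (hqw : qw ∈ P) (hqwdesc : T.Desc qw w)
    (hqv : qv ∉ P) (hqvdesc : T.Desc qv v) :
    AggLt (T.fagg (insert qv (P.erase qw))) (T.fagg P) := by
  have hswap (x : V) : T.fnum x (insert qv (P.erase qw)) + (if T.Desc qw x then 1 else 0) =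
      T.fnum x P + (if T.Desc qv x then 1 else 0) :=
    card_filter_insert_erase_add _ hqv hqw
  have hqv_parent : T.Desc qv (T.parent w) := hw ▸ hv ▸ hqvdesc.trans (T.desc_parent v)
  have hqw_parent : T.Desc qw (T.parent v) := hv ▸ hw ▸ hqwdesc.trans (T.desc_parent w)
  have hqvw : ¬ T.Desc qv w := hqvdesc.not_desc_sibling hv hv' hw hw' hvw
  refine aggLt_of_changes_below (f := (T.fnum · P)) (g := (T.fnum · (insert qv (P.erase qw))))
    (w := w) (fun x hx => ?_) rfl ?_
  · have hx' := hswap x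
    by_cases h₁ : T.Desc qv x <;> by_cases h₂ : T.Desc qw x <;>
      simp only [h₁, h₂, if_true, if_false] at hx'
    · omega
    · have := FailTree.fnum_le_of_desc_of_not_desc hqvdesc hqw_parent h₁ h₂ P
      omega
    · have := FailTree.fnum_le_of_desc_of_not_desc hqwdesc hqv_parent h₂ h₁ P
      have := FailTree.fnum_pos hqw h₂ (P := P)
      omega
    · omega
  · have hswap_w := hswap w
    simp only [hqwdesc, hqvw, if_true, if_false] at hswap_w
    omega

/-- The swap argument of Theorem 2: if `v` is an unfilled child of `u`, `w` a child of
`u` with `r_v < r_w - 1` and `r_w ≥ 1`, `q_w ∈ P` a leaf under `w` and `q_v ∉ P` a leaf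
under `v`, then `P* = (P − {q_w}) ∪ {q_v}` has strictly smaller failure aggregate. -/
theorem swap_strictly_improves {V : Type*} [Fintype V] (T : FailTree V)
    (P : Finset V) (hP : P ⊆ T.leaves)
    (u v w qv qw : V)
    (hv : T.parent v = u) (hv' : v ≠ u) (hw : T.parent w = u) (hw' : w ≠ u) (hvw : v ≠ w)
    (hunfilled : T.fnum v P < T.leafCount v)
    (hgap : T.fnum v P < T.fnum w P - 1) (hw1 : 1 ≤ T.fnum w P)
    (hqw : qw ∈ P) (hqwdesc : T.Desc qw w)
    (hqv : qv ∉ P) (hqvleaf : qv ∈ T.leaves) (hqvdesc : T.Desc qv v) :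
    AggLt (T.fagg (insert qv (P.erase qw))) (T.fagg P) :=
  swap_strictly_improves_general T P u v w qv qw hv hv' hw hw' hvw hgap hqw hqwdesc hqv hqvdesc
end

section
/- Path comparison is equivalent to placement comparison: with T, P, a, b as above, f⃗(r⇝a, P) ≤_L f⃗(r⇝b, P) if and only if f⃗(P ∪ {a}) ≤_L f⃗(P ∪ {b}). -/
open scoped Classical

/-!
Adding `a ∉ P` to the placement raises the failure number by one exactly on the path
`r ⇝ a`. Writing `g_a = f⃗(r ⇝ a, P)`, this gives `f⃗(P ∪ {a}) i = f⃗(P) i - g_a i + g_a (i - 1)`,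
so `f⃗(P ∪ {a}) - f⃗(P ∪ {b})` is the backward difference of `g_a - g_b`. As `g_a - g_b` is
finitely supported, its highest nonzero entry moves up by one index and keeps its sign,
which is exactly what lexicographic comparison from the top sees.
-/

section Lex

variable {p q : ℕ → ℕ}

theorem eq_of_eq_succ_of_eventually_eq {m N : ℕ} (hN : ∀ i, N ≤ i → p i = q i)
    (hsucc : ∀ i, m ≤ i → p (i + 1) = q (i + 1) → p i = q i) :
    ∀ i, m ≤ i → p i = q i := by
  suffices h : ∀ k i, N ≤ i + k → m ≤ i → p i = q i from fun i hi => h N i (by omega) hi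
  intro k
  induction k with
  | zero => exact fun i hi _ => hN i hi
  | succ k ih => exact fun i hi hmi => hsucc i hmi (ih (i + 1) (by omega) (by omega))

/-- The hypotheses say `p' i = c i - p i + p (i - 1)` with `p (-1) = 0`, written without
subtraction, and likewise for `q'`. -/
theorem aggLe_iff_aggLe_of_shift {c p' q' : ℕ → ℕ} {N : ℕ} (hN : ∀ i, N ≤ i → p i = q i)
    (hp₀ : p' 0 + p 0 = c 0) (hp : ∀ i, p' (i + 1) + p (i + 1) = p i + c (i + 1))
    (hq₀ : q' 0 + q 0 = c 0) (hq : ∀ i, q' (i + 1) + q (i + 1) = q i + c (i + 1)) :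
    AggLe p q ↔ AggLe p' q' := by
  have eq_succ : ∀ i, p i = q i → p (i + 1) = q (i + 1) → p' (i + 1) = q' (i + 1) := by
    intro i h h'; have := hp i; have := hq i; omega
  constructor
  · rintro (rfl | ⟨m, hlt, heq⟩)
    · left
      funext i
      cases i with
      | zero => omega
      | succ i => exact eq_succ i rfl rfl
    · refine Or.inr ⟨m + 1, ?_, fun i hi => ?_⟩
      · have := hp m; have := hq m; have := heq (m + 1) (by omega); omega
      · obtain ⟨j, rfl⟩ : ∃ j, i = j + 1 := ⟨i - 1, by omega⟩
        exact eq_succ j (heq j (by omega)) (heq (j + 1) (by omega))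
  · have eq_of_shift_eq : ∀ m, (∀ i, m < i → p' i = q' i) → ∀ i, m ≤ i → p i = q i :=
      fun m h => eq_of_eq_succ_of_eventually_eq hN fun i hi hi' => by
        have := hp i; have := hq i; have := h (i + 1) (by omega); omega
    rintro (rfl | ⟨m, hlt, heq⟩)
    · exact Or.inl (funext fun i => eq_of_shift_eq 0 (fun i _ => rfl) i (Nat.zero_le i))
    · have hpq := eq_of_shift_eq m heq
      refine Or.inr ⟨m - 1, ?_, fun i hi => hpq i (by omega)⟩
      cases m with
      | zero => have := hpq 0 le_rfl; omega
      | succ j =>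
        have := hp j; have := hq j; have := hpq (j + 1) le_rfl
        rw [Nat.add_sub_cancel]
        omega

end Lex

namespace FailTree

variable {V : Type*} [Fintype V] (T : FailTree V) {P : Finset V} {a : V}

theorem mem_pathTo {x v : V} : v ∈ T.pathTo x ↔ T.Desc x v := by
  simp [pathTo]

theorem fnum_insert (haP : a ∉ P) (v : V) :
    T.fnum v (insert a P) = T.fnum v P + if T.Desc a v then 1 else 0 := by
  unfold fnum
  rw [Finset.filter_insert]
  split_ifs
  · rw [Finset.card_insert_of_notMem (by simp [haP])]
  · rfl

theorem faggOn_add_faggOn_compl (S Q : Finset V) (i : ℕ) :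
    T.faggOn S Q i + T.faggOn Sᶜ Q i = T.fagg Q i := by
  unfold fagg faggOn
  rw [← Finset.card_union_of_disjoint (Finset.disjoint_filter_filter disjoint_compl_right),
    ← Finset.filter_union, Finset.union_compl]

theorem faggOn_eq_zero_of_card_lt (S : Finset V) {i : ℕ} (hi : P.card < i) :
    T.faggOn S P i = 0 := by
  refine Finset.card_eq_zero.mpr (Finset.filter_eq_empty_iff.mpr fun v _ hv => ?_)
  have : T.fnum v P ≤ P.card := Finset.card_filter_le _ _
  omega

theorem faggOn_insert_zero {S : Finset V} (haP : a ∉ P) (hS : ∀ v ∈ S, T.Desc a v) :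
    T.faggOn S (insert a P) 0 = 0 := by
  refine Finset.card_eq_zero.mpr (Finset.filter_eq_empty_iff.mpr fun v hv => ?_)
  rw [T.fnum_insert haP, if_pos (hS v hv)]
  omega

theorem faggOn_insert_succ {S : Finset V} (haP : a ∉ P) (hS : ∀ v ∈ S, T.Desc a v) (i : ℕ) :
    T.faggOn S (insert a P) (i + 1) = T.faggOn S P i := by
  unfold faggOn
  congr 1
  refine Finset.filter_congr fun v hv => ?_
  rw [T.fnum_insert haP, if_pos (hS v hv), Nat.add_right_cancel_iff]

theorem faggOn_insert_of_not_desc {S : Finset V} (haP : a ∉ P) (hS : ∀ v ∈ S, ¬ T.Desc a v) :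
    T.faggOn S (insert a P) = T.faggOn S P := by
  funext i
  unfold faggOn
  congr 1
  refine Finset.filter_congr fun v hv => ?_
  rw [T.fnum_insert haP, if_neg (hS v hv), Nat.add_zero]

theorem faggOn_pathTo_compl_insert (haP : a ∉ P) :
    T.faggOn (T.pathTo a)ᶜ (insert a P) = T.faggOn (T.pathTo a)ᶜ P :=
  T.faggOn_insert_of_not_desc haP fun v hv => by simpa [mem_pathTo] using hv

theorem fagg_insert_zero (haP : a ∉ P) :
    T.fagg (insert a P) 0 + T.faggOn (T.pathTo a) P 0 = T.fagg P 0 := by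
  rw [← T.faggOn_add_faggOn_compl (T.pathTo a), ← T.faggOn_add_faggOn_compl (T.pathTo a),
    T.faggOn_insert_zero haP fun v => (T.mem_pathTo).mp, T.faggOn_pathTo_compl_insert haP]
  omega

theorem fagg_insert_succ (haP : a ∉ P) (i : ℕ) :
    T.fagg (insert a P) (i + 1) + T.faggOn (T.pathTo a) P (i + 1) =
      T.faggOn (T.pathTo a) P i + T.fagg P (i + 1) := by
  rw [← T.faggOn_add_faggOn_compl (T.pathTo a), ← T.faggOn_add_faggOn_compl (T.pathTo a),
    T.faggOn_insert_succ haP fun v => (T.mem_pathTo).mp, T.faggOn_pathTo_compl_insert haP]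
  omega

end FailTree

theorem path_le_iff_placement_le_general {V : Type*} [Fintype V] (T : FailTree V)
    (P : Finset V)
    (a b : V) (haP : a ∉ P) (hbP : b ∉ P) :
    AggLe (T.faggOn (T.pathTo a) P) (T.faggOn (T.pathTo b) P) ↔
      AggLe (T.fagg (insert a P)) (T.fagg (insert b P)) := by
  refine aggLe_iff_aggLe_of_shift (N := P.card + 1) (fun i hi => ?_)
    (T.fagg_insert_zero haP) (T.fagg_insert_succ haP)
    (T.fagg_insert_zero hbP) (T.fagg_insert_succ hbP)
  rw [T.faggOn_eq_zero_of_card_lt _ (by omega), T.faggOn_eq_zero_of_card_lt _ (by omega)]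

/-- Corollary 1: path comparison is equivalent to placement comparison. -/
theorem path_le_iff_placement_le {V : Type*} [Fintype V] (T : FailTree V)
    (P : Finset V) (hP : P ⊆ T.leaves)
    (a b : V) (ha : a ∈ T.leaves) (hb : b ∈ T.leaves) (haP : a ∉ P) (hbP : b ∉ P) :
    AggLe (T.faggOn (T.pathTo a) P) (T.faggOn (T.pathTo b) P) ↔
      AggLe (T.fagg (insert a P)) (T.fagg (insert b P)) :=
  path_le_iff_placement_le_general T P a b haP hbP
end
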